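/- Let (Ω, μ) and (Ω', ν) be probability spaces, let d be a natural number, let f : Ω → ℝ^d and g : Ω' → ℝ^d be measurable, let p : Ω → ℝ be measurable, and let M > 0. Assume g is integrable with respect to ν, that for every x ∈ Ω the function y ↦ exp(⟪f(x), g(y)⟫) is integrable with respect to ν, and that both functions x ↦ −log( exp(p(x)) / ( exp(p(x)) + M · ∫ exp(⟪f(x), g(y)⟫) dν(y) ) ) and x ↦ −log( exp(p(x)) / ( exp(p(x)) + M · exp(⟪f(x), ∫ g dν⟫) ) ) are integrable with respect to μ. Then ∫ −log( exp(p(x)) / ( exp(p(x)) + M · ∫ exp(⟪f(x), g(y)⟫) dν(y) ) ) dμ(x) ≥ ∫ −log( exp(p(x)) / ( exp(p(x)) + M · exp(⟪f(x), ∫ g dν⟫) ) ) dμ(x). -/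
import Mathlib

open MeasureTheory RealInnerProductSpace

/-- The population supervised softmax cross-entropy loss with the mean classifier
(left-hand side) is bounded below by the population contrastive loss with the mean
negative embedding (right-hand side): `L_SM(f) ≥ L_cl(f)`. -/
theorem supervised_loss_ge_contrastive_loss {Ω Ω' : Type*} [MeasurableSpace Ω]
    [MeasurableSpace Ω'] (μ : Measure Ω) (ν : Measure Ω') [IsProbabilityMeasure μ]
    [IsProbabilityMeasure ν] (d : ℕ)
    (f : Ω → EuclideanSpace ℝ (Fin d)) (g : Ω' → EuclideanSpace ℝ (Fin d))
    (hfmeas : Measurable f) (hgmeas : Measurable g)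
    (p : Ω → ℝ) (hpmeas : Measurable p) (M : ℝ) (hM : 0 < M)
    (hgint : Integrable g ν)
    (hexp : ∀ x : Ω, Integrable (fun y => Real.exp ⟪f x, g y⟫) ν)
    (hint₁ : Integrable (fun x =>
      -Real.log (Real.exp (p x) /
        (Real.exp (p x) + M * ∫ y, Real.exp ⟪f x, g y⟫ ∂ν))) μ)
    (hint₂ : Integrable (fun x =>
      -Real.log (Real.exp (p x) /
        (Real.exp (p x) + M * Real.exp ⟪f x, ∫ y, g y ∂ν⟫))) μ) :
    ∫ x, -Real.log (Real.exp (p x) /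
        (Real.exp (p x) + M * ∫ y, Real.exp ⟪f x, g y⟫ ∂ν)) ∂μ ≥
      ∫ x, -Real.log (Real.exp (p x) /
        (Real.exp (p x) + M * Real.exp ⟪f x, ∫ y, g y ∂ν⟫)) ∂μ := by
  refine integral_mono hint₂ hint₁ fun x => ?_
  -- key: exp ⟪f x, ∫ g⟫ ≤ ∫ exp ⟪f x, g y⟫
  have hinner : Integrable (fun y => ⟪f x, g y⟫) ν := hgint.const_inner (f x)
  have hkey : Real.exp ⟪f x, ∫ y, g y ∂ν⟫ ≤ ∫ y, Real.exp ⟪f x, g y⟫ ∂ν := by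
    have h1 : ⟪f x, ∫ y, g y ∂ν⟫ = ∫ y, ⟪f x, g y⟫ ∂ν :=
      (integral_inner hgint (f x)).symm
    rw [h1]
    exact (convexOn_exp.map_integral_le Real.continuous_exp.continuousOn isClosed_univ
      (Filter.Eventually.of_forall fun y => trivial) hinner (hexp x))
  -- monotonicity of t ↦ -log (a / (a + M t)) for a > 0, Mt > 0
  have ha : (0:ℝ) < Real.exp (p x) := Real.exp_pos _
  have h2 : (0:ℝ) < ∫ y, Real.exp ⟪f x, g y⟫ ∂ν :=
    lt_of_lt_of_le (Real.exp_pos _) hkey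
  have h1 : (0:ℝ) < Real.exp ⟪f x, ∫ y, g y ∂ν⟫ := Real.exp_pos _
  have e1 : Real.exp (p x) + M * Real.exp ⟪f x, ∫ y, g y ∂ν⟫ > 0 := by positivity
  have e2 : Real.exp (p x) + M * ∫ y, Real.exp ⟪f x, g y⟫ ∂ν > 0 := by positivity
  rw [Real.log_div ha.ne' e1.ne', Real.log_div ha.ne' e2.ne']
  simp only [neg_sub]
  gcongr
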